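/- Let q be a prime power with q−1 = NK, 1 < K < q−1, α primitive in F_q, χ_1 the canonical additive character, φ_i the multiplicative characters. Define K×N arrays C^i with (k,t)-entry χ_1(α^{k+Kt})φ_i(α^{k+Kt}). Then for i ≠ j and τ ∈ [1,N−1], |R_{C^i,C^j}(τ)| = √q. -/

import Mathlib

/-- The `(k,t)` entry `χ₁(α^{k+Kt}) φ_i(α^{k+Kt})` of the array `C^i`. -/
noncomputable def qcssEntry (p : ℕ) (F : Type) [Field F] [Fintype F]
    [Algebra (ZMod p) F] (α : F) (i m : ℕ) : ℂ :=
  Complex.exp (2 * Real.pi * Complex.I *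
      (((Algebra.trace (ZMod p) F (α ^ m)).val : ℕ) : ℂ) / (p : ℂ)) *
  Complex.exp (2 * Real.pi * Complex.I * ((i * m : ℕ) : ℂ) /
      (((Fintype.card F - 1 : ℕ)) : ℂ))

noncomputable def eN (n : ℕ) (a : ℤ) : ℂ :=
  Complex.exp (2 * Real.pi * Complex.I * (a : ℂ) / (n : ℂ))

lemma eN_add (n : ℕ) (a b : ℤ) : eN n (a + b) = eN n a * eN n b := by
  rw [eN, eN, eN, ← Complex.exp_add]
  congr 1
  push_cast
  ring

lemma eN_zero (n : ℕ) : eN n 0 = 1 := by simp [eN]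

lemma eN_mul_self (n : ℕ) (hn : n ≠ 0) (k : ℤ) : eN n (k * n) = 1 := by
  have hn' : (n : ℂ) ≠ 0 := by exact_mod_cast hn
  rw [eN]
  have : 2 * Real.pi * Complex.I * ((k * n : ℤ) : ℂ) / (n : ℂ) = (k : ℂ) * (2 * Real.pi * Complex.I) := by
    push_cast; field_simp
  rw [this, Complex.exp_int_mul_two_pi_mul_I]

lemma eN_int_congr (n : ℕ) (hn : n ≠ 0) (a b : ℤ) (h : (n : ℤ) ∣ (a - b)) :
    eN n a = eN n b := by
  obtain ⟨k, hk⟩ := h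
  have : a = b + k * n := by linarith [hk]
  rw [this, eN_add, eN_mul_self n hn, mul_one]

lemma eN_pow (n : ℕ) (a : ℤ) (m : ℕ) : eN n a ^ m = eN n (a * m) := by
  rw [eN, eN, ← Complex.exp_nat_mul]
  congr 1
  push_cast
  ring

lemma abs_eN (n : ℕ) (a : ℤ) : ‖eN n a‖ = 1 := by
  have : 2 * Real.pi * Complex.I * (a : ℂ) / (n : ℂ) =
      ((2 * Real.pi * a / n : ℝ) : ℂ) * Complex.I := by push_cast; ring
  rw [eN, this, Complex.norm_exp_ofReal_mul_I]

lemma conj_eN (n : ℕ) (a : ℤ) : (starRingEnd ℂ) (eN n a) = eN n (-a) := by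
  rw [eN, eN, ← Complex.exp_conj]
  congr 1
  simp only [map_div₀, map_mul, Complex.conj_I, map_ofNat,
    Complex.conj_natCast, Complex.conj_ofReal, map_intCast]
  push_cast
  ring

lemma eN_ne_one (n : ℕ) (hn : n ≠ 0) (a : ℤ) (h : ¬ (n : ℤ) ∣ a) : eN n a ≠ 1 := by
  intro hcon
  rw [eN, Complex.exp_eq_one_iff] at hcon
  obtain ⟨k, hk⟩ := hcon
  have hn' : (n : ℂ) ≠ 0 := by exact_mod_cast hn
  have h2 : (2 * Real.pi * Complex.I) ≠ 0 := by
    simp [Real.pi_ne_zero, Complex.I_ne_zero]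
  have : (a : ℂ) = (k : ℂ) * (n : ℂ) := by
    field_simp at hk
    linear_combination hk
  have : a = k * n := by exact_mod_cast this
  exact h ⟨k, by linarith⟩

lemma sum_pow_eq_zero {n : ℕ} (hn : n ≠ 0) {z : ℂ} (hz : z ≠ 1) (hzn : z ^ n = 1) :
    ∑ u ∈ Finset.range n, z ^ u = 0 := by
  rw [geom_sum_eq hz, hzn, sub_self, zero_div]

lemma pow_mod_eq {n : ℕ} {z : ℂ} (hzn : z ^ n = 1) (a : ℕ) : z ^ (a % n) = z ^ a := by
  conv_rhs => rw [← Nat.mod_add_div a n, pow_add, pow_mul, hzn, one_pow, mul_one]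

lemma eN_n_pow (n : ℕ) (hn : n ≠ 0) (d : ℤ) : eN n d ^ n = 1 := by
  rw [eN_pow]
  exact eN_mul_self n hn d

/-- The additive character `x ↦ exp(2πi x.val / p)` on `ZMod p`. -/
noncomputable def Ep (p : ℕ) (x : ZMod p) : ℂ := eN p (x.val : ℤ)

lemma Ep_zero (p : ℕ) [NeZero p] : Ep p 0 = 1 := by
  simp [Ep, eN_zero]

lemma Ep_add (p : ℕ) [NeZero p] (x y : ZMod p) : Ep p (x + y) = Ep p x * Ep p y := by
  rw [Ep, Ep, Ep, ← eN_add]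
  refine eN_int_congr p (NeZero.ne p) _ _ ⟨-(((x.val + y.val) / p : ℕ) : ℤ), ?_⟩
  have h : ((x + y).val : ℤ) = (((x.val + y.val) % p : ℕ) : ℤ) := by
    exact_mod_cast congrArg (fun m : ℕ => (m : ℤ)) (ZMod.val_add x y)
  have h2 : (((x.val + y.val) % p : ℕ) : ℤ) + (p : ℤ) * (((x.val + y.val) / p : ℕ) : ℤ)
      = (x.val : ℤ) + (y.val : ℤ) := by exact_mod_cast Nat.mod_add_div (x.val + y.val) p
  push_cast at h h2 ⊢
  linarith

lemma conj_Ep (p : ℕ) [NeZero p] (x : ZMod p) :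
    (starRingEnd ℂ) (Ep p x) = Ep p (-x) := by
  rw [Ep, conj_eN]
  rw [Ep]
  apply eN_int_congr p (NeZero.ne p)
  have h1 : x.val < p := ZMod.val_lt x
  rcases eq_or_ne x 0 with rfl | hx
  · simp
  · have h2 : (-x).val = p - x.val := by rw [ZMod.neg_val, if_neg hx]
    have h3 : x.val ≠ 0 := fun h => hx ((ZMod.val_eq_zero x).mp h)
    refine ⟨-1, ?_⟩
    rw [h2]
    push_cast
    omega

section psi

variable (p : ℕ) [Fact p.Prime] (F : Type) [Field F] [Fintype F] [Algebra (ZMod p) F]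

/-- The canonical additive character `χ₁` on `F`. -/
noncomputable def psiF (x : F) : ℂ := Ep p (Algebra.trace (ZMod p) F x)

lemma psiF_zero : psiF p F 0 = 1 := by simp [psiF, Ep_zero]

lemma psiF_add (x y : F) : psiF p F (x + y) = psiF p F x * psiF p F y := by
  rw [psiF, psiF, psiF, map_add, Ep_add]

lemma conj_psiF (x : F) : (starRingEnd ℂ) (psiF p F x) = psiF p F (-x) := by
  rw [psiF, conj_Ep, psiF, map_neg]

lemma psiF_mul_conj (x y : F) : psiF p F x * (starRingEnd ℂ) (psiF p F y) = psiF p F (x - y) := by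
  rw [conj_psiF, ← psiF_add, sub_eq_add_neg]

lemma sum_psiF_eq_zero : ∑ y : F, psiF p F y = 0 := by
  have : FiniteDimensional (ZMod p) F := Module.Finite.of_finite
  obtain ⟨y₀, hy₀⟩ := Algebra.trace_surjective (ZMod p) F 1
  have hne : psiF p F y₀ ≠ 1 := by
    rw [psiF, hy₀]
    have hval : ((1 : ZMod p)).val = 1 := ZMod.val_one p
    rw [Ep, hval]
    refine eN_ne_one p (NeZero.ne p) 1 ?_
    intro hdvd
    have hp : 2 ≤ p := (Fact.out : p.Prime).two_le
    have := Int.le_of_dvd one_pos hdvd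
    omega
  have hshift : ∑ y : F, psiF p F y = ∑ y : F, psiF p F (y₀ + y) :=
    (Fintype.sum_equiv (Equiv.addLeft y₀) _ _ (fun y => rfl)).symm
  have hs2 : ∑ y : F, psiF p F (y₀ + y) = psiF p F y₀ * ∑ y : F, psiF p F y := by
    rw [Finset.mul_sum]
    exact Finset.sum_congr rfl fun y _ => psiF_add p F y₀ y
  have : ∑ y : F, psiF p F y = psiF p F y₀ * ∑ y : F, psiF p F y := by
    conv_lhs => rw [hshift]
    rw [hs2]
  have h2 : (psiF p F y₀ - 1) * ∑ y : F, psiF p F y = 0 := by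
    rw [sub_mul, one_mul, ← this, sub_self]
  rcases mul_eq_zero.mp h2 with h | h
  · exact absurd (by linear_combination h) hne
  · exact h

end psi

section inner

variable (p : ℕ) [Fact p.Prime] (F : Type) [Field F] [Fintype F] [Algebra (ZMod p) F]

lemma sum_psiF_pow (α : F) (hα : orderOf α = Fintype.card F - 1)
    (hcard : 2 ≤ Fintype.card F) (b : F) (hb : b ≠ 0) :
    ∑ m : Fin (Fintype.card F - 1), psiF p F (b * α ^ (m : ℕ)) = -1 := by
  classical
  set n := Fintype.card F - 1 with hn
  have hn0 : n ≠ 0 := by omega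
  have hα0 : α ≠ 0 := by
    intro h
    have h1 := pow_orderOf_eq_one α
    rw [hα, h, zero_pow hn0] at h1
    exact zero_ne_one h1
  set αu : Fˣ := Units.mk0 α hα0 with hαu_def
  have hαu : orderOf αu = n := by
    rw [← orderOf_units]
    simpa [hαu_def] using hα
  · have hinj : Function.Injective (fun m : Fin n => b * α ^ (m : ℕ)) := by
      intro m₁ m₂ h
      simp only at h
      have h2 : α ^ (m₁ : ℕ) = α ^ (m₂ : ℕ) := mul_left_cancel₀ hb h
      have h2u : αu ^ (m₁ : ℕ) = αu ^ (m₂ : ℕ) := Units.ext (by simpa [hαu_def] using h2)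
      have h3 : (m₁ : ℕ) ≡ (m₂ : ℕ) [MOD orderOf αu] := (pow_eq_pow_iff_modEq).mp h2u
      rw [hαu] at h3
      have h4 : (m₁ : ℕ) % n = (m₂ : ℕ) % n := h3
      rw [Nat.mod_eq_of_lt m₁.isLt, Nat.mod_eq_of_lt m₂.isLt] at h4
      exact Fin.ext h4
    have himg : (Finset.univ : Finset (Fin n)).image (fun m : Fin n => b * α ^ (m : ℕ)) =
        (Finset.univ : Finset F).erase 0 := by
      apply Finset.eq_of_subset_of_card_le
      · intro x hx
        simp only [Finset.mem_image] at hx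
        obtain ⟨m, _, rfl⟩ := hx
        exact Finset.mem_erase.mpr ⟨mul_ne_zero hb (pow_ne_zero _ hα0), Finset.mem_univ _⟩
      · rw [Finset.card_image_of_injective _ hinj, Finset.card_erase_of_mem (Finset.mem_univ _)]
        simp [hn]
    have hsum : ∑ m : Fin n, psiF p F (b * α ^ (m : ℕ)) =
        ∑ x ∈ (Finset.univ : Finset F).erase 0, psiF p F x := by
      rw [← himg, Finset.sum_image (fun m _ m' _ h => hinj h)]
    rw [hsum]
    have := Finset.sum_erase_add (Finset.univ : Finset F) (psiF p F) (Finset.mem_univ 0)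
    rw [sum_psiF_eq_zero p F] at this
    rw [psiF_zero] at this
    linear_combination this

end inner

section gauss

variable (p : ℕ) [Fact p.Prime] (F : Type) [Field F] [Fintype F] [Algebra (ZMod p) F]

lemma gauss_main (α : F) (hα : orderOf α = Fintype.card F - 1) (hcard : 2 ≤ Fintype.card F)
    (a : F) (ha : a ≠ 0) (z : ℂ) (hz1 : z ≠ 1) (hzn : z ^ (Fintype.card F - 1) = 1)
    (hzc : z * (starRingEnd ℂ) z = 1) :
    (∑ m : Fin (Fintype.card F - 1), psiF p F (a * α ^ (m : ℕ)) * z ^ (m : ℕ)) *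
      (starRingEnd ℂ) (∑ m : Fin (Fintype.card F - 1), psiF p F (a * α ^ (m : ℕ)) * z ^ (m : ℕ)) =
      (Fintype.card F : ℂ) := by
  classical
  set n := Fintype.card F - 1 with hn
  have hn0 : n ≠ 0 := by omega
  haveI : NeZero n := ⟨hn0⟩
  have hα0 : α ≠ 0 := by
    intro h
    have h1 := pow_orderOf_eq_one α
    rw [hα, h, zero_pow hn0] at h1
    exact zero_ne_one h1
  set αu : Fˣ := Units.mk0 α hα0 with hαu_def
  have hαu : orderOf αu = n := by
    rw [← orderOf_units]
    simpa [hαu_def] using hα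
  set f : Fin n → ℂ := fun m => psiF p F (a * α ^ (m : ℕ)) * z ^ (m : ℕ) with hf
  rw [map_sum, Finset.sum_mul_sum, Finset.sum_comm]
  have key : ∀ m' : Fin n, ∑ m : Fin n, f m * (starRingEnd ℂ) (f m') =
      (∑ u : Fin n, psiF p F ((a * (α ^ (u : ℕ) - 1)) * α ^ ((m' : ℕ))) * z ^ (u : ℕ)) := by
    intro m'
    have hreindex : ∑ m : Fin n, f m * (starRingEnd ℂ) (f m') =
        ∑ u : Fin n, f (m' + u) * (starRingEnd ℂ) (f m') :=
      (Fintype.sum_equiv (Equiv.addLeft m') _ _ (fun u => rfl)).symm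
    rw [hreindex]
    refine Finset.sum_congr rfl fun u _ => ?_
    have hval : ((m' + u : Fin n) : ℕ) = ((m' : ℕ) + (u : ℕ)) % n := Fin.val_add m' u
    have hpow_α : α ^ ((m' + u : Fin n) : ℕ) = α ^ (m' : ℕ) * α ^ (u : ℕ) := by
      have h1 : ((αu ^ ((m' + u : Fin n) : ℕ) : Fˣ) : F) =
          ((αu ^ ((m' : ℕ) + (u : ℕ)) : Fˣ) : F) := by
        rw [hval]
        have h2 := pow_mod_orderOf αu ((m' : ℕ) + (u : ℕ))
        rw [hαu] at h2
        exact congrArg Units.val h2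
      simpa [hαu_def, pow_add] using h1
    have hpow_z : z ^ ((m' + u : Fin n) : ℕ) = z ^ (m' : ℕ) * z ^ (u : ℕ) := by
      rw [hval, pow_mod_eq hzn, pow_add]
    calc f (m' + u) * (starRingEnd ℂ) (f m')
        = (psiF p F (a * α ^ (m' : ℕ) * α ^ (u : ℕ)) * psiF p F (-(a * α ^ (m' : ℕ)))) *
            ((z * (starRingEnd ℂ) z) ^ (m' : ℕ)) * z ^ (u : ℕ) := by
          simp only [hf, map_mul, conj_psiF, map_pow, hpow_α, hpow_z, mul_pow, mul_assoc,
            mul_comm, mul_left_comm]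
      _ = psiF p F ((a * (α ^ (u : ℕ) - 1)) * α ^ (m' : ℕ)) * z ^ (u : ℕ) := by
          rw [hzc, one_pow, mul_one, ← psiF_add]
          congr 2
          ring
  rw [Finset.sum_congr rfl (fun m' _ => key m'), Finset.sum_comm]
  have inner_eval : ∀ u : Fin n,
      ∑ m' : Fin n, psiF p F ((a * (α ^ (u : ℕ) - 1)) * α ^ ((m' : ℕ))) * z ^ (u : ℕ) =
      (∑ m' : Fin n, psiF p F ((a * (α ^ (u : ℕ) - 1)) * α ^ ((m' : ℕ)))) * z ^ (u : ℕ) :=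
    fun u => (Finset.sum_mul _ _ _).symm
  rw [Finset.sum_congr rfl (fun u _ => inner_eval u)]
  rw [← Finset.add_sum_erase _ _ (Finset.mem_univ (0 : Fin n))]
  have h0 : (∑ m' : Fin n, psiF p F ((a * (α ^ ((0 : Fin n) : ℕ) - 1)) * α ^ ((m' : ℕ)))) *
      z ^ ((0 : Fin n) : ℕ) = (n : ℂ) := by
    simp [psiF_zero, Finset.card_univ]
  rw [h0]
  have hrest : ∑ u ∈ (Finset.univ : Finset (Fin n)).erase 0,
      (∑ m' : Fin n, psiF p F ((a * (α ^ (u : ℕ) - 1)) * α ^ ((m' : ℕ)))) * z ^ (u : ℕ) =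
      ∑ u ∈ (Finset.univ : Finset (Fin n)).erase 0, -(z ^ (u : ℕ)) := by
    refine Finset.sum_congr rfl fun u hu => ?_
    have hu0 : u ≠ 0 := (Finset.mem_erase.mp hu).1
    have huval : (u : ℕ) ≠ 0 := fun h => hu0 (Fin.ext h)
    have hne1 : α ^ (u : ℕ) ≠ 1 := by
      intro h
      have hdvd := orderOf_dvd_of_pow_eq_one h
      rw [hα] at hdvd
      have := Nat.le_of_dvd (Nat.pos_of_ne_zero huval) hdvd
      have := u.isLt
      omega
    have hb : a * (α ^ (u : ℕ) - 1) ≠ 0 := mul_ne_zero ha (sub_ne_zero.mpr hne1)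
    rw [sum_psiF_pow p F α hα hcard _ hb]
    ring
  rw [hrest]
  have hsumz : ∑ u : Fin n, z ^ (u : ℕ) = 0 := by
    rw [← Finset.sum_range (fun u => z ^ u)]
    exact sum_pow_eq_zero hn0 hz1 hzn
  have herase : ∑ u ∈ (Finset.univ : Finset (Fin n)).erase 0, -(z ^ (u : ℕ)) = 1 := by
    have h := Finset.add_sum_erase (Finset.univ : Finset (Fin n))
      (fun u : Fin n => z ^ (u : ℕ)) (Finset.mem_univ 0)
    rw [hsumz] at h
    simp only [Fin.val_zero, pow_zero] at h
    rw [Finset.sum_neg_distrib]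
    linear_combination -h
  rw [herase]
  have : (n : ℂ) + 1 = (Fintype.card F : ℂ) := by
    have hnn : n + 1 = Fintype.card F := by omega
    exact_mod_cast hnn
  exact this

end gauss

lemma sum_double (g : ℕ → ℂ) (K N : ℕ) :
    ∑ k ∈ Finset.range K, ∑ t ∈ Finset.range N, g (k + K * t) =
      ∑ m ∈ Finset.range (K * N), g m := by
  induction N with
  | zero => simp
  | succ N ih =>
      rw [Nat.mul_succ, Finset.sum_range_add, ← ih]
      simp only [Finset.sum_range_succ, Finset.sum_add_distrib]
      congr 1
      exact Finset.sum_congr rfl fun k _ => by rw [Nat.add_comm (K * N) k]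

section entry

variable (p : ℕ) [Fact p.Prime] (F : Type) [Field F] [Fintype F] [Algebra (ZMod p) F]

lemma qcssEntry_eq (α : F) (i m : ℕ) :
    qcssEntry p F α i m =
      psiF p F (α ^ m) * eN (Fintype.card F - 1) ((i * m : ℕ) : ℤ) := by
  rw [qcssEntry, psiF, Ep, eN, eN]
  norm_cast

lemma qcssEntry_congr (α : F) (hα : orderOf α = Fintype.card F - 1)
    (hcard : 2 ≤ Fintype.card F) (i m₁ m₂ : ℕ)
    (h : m₁ ≡ m₂ [MOD Fintype.card F - 1]) :
    qcssEntry p F α i m₁ = qcssEntry p F α i m₂ := by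
  have hn0 : Fintype.card F - 1 ≠ 0 := by omega
  have hα0 : α ≠ 0 := by
    intro h0
    have h1 := pow_orderOf_eq_one α
    rw [hα, h0, zero_pow hn0] at h1
    exact zero_ne_one h1
  set αu : Fˣ := Units.mk0 α hα0 with hαu_def
  have hαu : orderOf αu = Fintype.card F - 1 := by
    rw [← orderOf_units]
    simpa [hαu_def] using hα
  rw [qcssEntry_eq, qcssEntry_eq]
  congr 1
  · have h2 : αu ^ m₁ = αu ^ m₂ := pow_eq_pow_iff_modEq.mpr (by rw [hαu]; exact h)
    have h3 := congrArg Units.val h2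
    exact congrArg (psiF p F) (by simpa [hαu_def] using h3)
  · refine eN_int_congr _ hn0 _ _ ?_
    have h4 : (i * m₁) ≡ (i * m₂) [MOD Fintype.card F - 1] := h.mul_left i
    have h5 := h4.symm.dvd
    push_cast at h5 ⊢
    convert h5 using 1

end entry

/-- Cross-correlation at nonzero shift: for `i ≠ j` and `τ ∈ [1, N-1]`, the
periodic correlation magnitude of `C^i` and `C^j` equals `√q`. -/
theorem qcss_crosscorrelation_abs_eq_sqrt_q (p : ℕ) [Fact p.Prime] (F : Type) [Field F]
    [Fintype F] [Algebra (ZMod p) F] [CharP F p]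
    (α : F) (hα : orderOf α = Fintype.card F - 1)
    (N K : ℕ) (hNK : Fintype.card F - 1 = N * K) (hK1 : 1 < K)
    (hK2 : K < Fintype.card F - 1)
    (i j τ : ℕ) (hi : i < Fintype.card F - 1) (hj : j < Fintype.card F - 1)
    (hij : i ≠ j) (hτ1 : 1 ≤ τ) (hτ2 : τ < N) :
    ‖(∑ k ∈ Finset.range K, ∑ t ∈ Finset.range N,
      qcssEntry p F α i (k + K * t) *
        (starRingEnd ℂ) (qcssEntry p F α j (k + K * ((t + τ) % N))))‖ =
      Real.sqrt (Fintype.card F) := by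
  classical
  have hq2 : 2 ≤ Fintype.card F := Fintype.one_lt_card
  have hn0 : Fintype.card F - 1 ≠ 0 := by omega
  haveI : NeZero (Fintype.card F - 1) := ⟨hn0⟩
  have hKN : K * N = Fintype.card F - 1 := by rw [hNK, Nat.mul_comm]
  have hKτ_pos : 0 < K * τ := Nat.mul_pos (by omega) (by omega)
  have hKτ_lt : K * τ < Fintype.card F - 1 := by
    have h1 : K * τ + K ≤ K * N := by
      calc K * τ + K = K * (τ + 1) := by ring
        _ ≤ K * N := Nat.mul_le_mul_left K (by omega)
    omega
  have hα0 : α ≠ 0 := by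
    intro h0
    have h1 := pow_orderOf_eq_one α
    rw [hα, h0, zero_pow hn0] at h1
    exact zero_ne_one h1
  -- Step B: replace the cyclic shift by a plain shift of the exponent
  have hstep : ∀ k t : ℕ, qcssEntry p F α j (k + K * ((t + τ) % N)) =
      qcssEntry p F α j ((k + K * t) + K * τ) := by
    intro k t
    refine qcssEntry_congr p F α hα hq2 j _ _ ?_
    have h1 : (t + τ) % N ≡ t + τ [MOD N] := Nat.mod_modEq _ _
    have h2 : K * ((t + τ) % N) ≡ K * (t + τ) [MOD K * N] := h1.mul_left' K
    rw [hKN] at h2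
    have h3 := h2.add_left k
    calc k + K * ((t + τ) % N) ≡ k + K * (t + τ) [MOD Fintype.card F - 1] := h3
      _ = (k + K * t) + K * τ := by ring
  -- abbreviations
  set d : ℤ := (i : ℤ) - (j : ℤ) with hd
  set z : ℂ := eN (Fintype.card F - 1) d with hz
  set w : ℂ := eN (Fintype.card F - 1) (-((j : ℤ) * ((K * τ : ℕ) : ℤ))) with hw
  set a : F := 1 - α ^ (K * τ) with ha_def
  have hpow_ne : α ^ (K * τ) ≠ 1 := by
    intro h
    have hdvd := orderOf_dvd_of_pow_eq_one h
    rw [hα] at hdvd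
    have := Nat.le_of_dvd hKτ_pos hdvd
    omega
  have ha : a ≠ 0 := sub_ne_zero.mpr fun h => hpow_ne h.symm
  -- Step D: pointwise identity
  have hpoint : ∀ m : ℕ, qcssEntry p F α i m *
      (starRingEnd ℂ) (qcssEntry p F α j (m + K * τ)) =
      w * (psiF p F (a * α ^ m) * z ^ m) := by
    intro m
    rw [qcssEntry_eq, qcssEntry_eq, map_mul, conj_psiF, conj_eN]
    have hψ : psiF p F (α ^ m) * psiF p F (-(α ^ (m + K * τ))) = psiF p F (a * α ^ m) := by
      rw [← psiF_add]
      congr 1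
      rw [pow_add, ha_def]
      ring
    have he : eN (Fintype.card F - 1) ((i * m : ℕ) : ℤ) *
        eN (Fintype.card F - 1) (-((j * (m + K * τ) : ℕ) : ℤ)) = w * z ^ m := by
      rw [← eN_add, hw, hz, eN_pow, ← eN_add]
      congr 1
      push_cast
      ring
    calc psiF p F (α ^ m) * eN (Fintype.card F - 1) ((i * m : ℕ) : ℤ) *
          (psiF p F (-(α ^ (m + K * τ))) * eN (Fintype.card F - 1) (-((j * (m + K * τ) : ℕ) : ℤ)))
        = (psiF p F (α ^ m) * psiF p F (-(α ^ (m + K * τ)))) *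
          (eN (Fintype.card F - 1) ((i * m : ℕ) : ℤ) *
            eN (Fintype.card F - 1) (-((j * (m + K * τ) : ℕ) : ℤ))) := by ring
      _ = w * (psiF p F (a * α ^ m) * z ^ m) := by rw [hψ, he]; ring
  -- assemble the sum
  have hsum : ∑ k ∈ Finset.range K, ∑ t ∈ Finset.range N,
      qcssEntry p F α i (k + K * t) *
        (starRingEnd ℂ) (qcssEntry p F α j (k + K * ((t + τ) % N))) =
      w * ∑ m : Fin (Fintype.card F - 1), psiF p F (a * α ^ (m : ℕ)) * z ^ (m : ℕ) := by
    set g : ℕ → ℂ := fun m => qcssEntry p F α i m *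
      (starRingEnd ℂ) (qcssEntry p F α j (m + K * τ)) with hg
    have h1 : ∀ k ∈ Finset.range K, ∑ t ∈ Finset.range N,
        qcssEntry p F α i (k + K * t) *
          (starRingEnd ℂ) (qcssEntry p F α j (k + K * ((t + τ) % N))) =
        ∑ t ∈ Finset.range N, g (k + K * t) := by
      intro k _
      refine Finset.sum_congr rfl fun t _ => ?_
      rw [hg]
      simp only
      rw [hstep k t]
    calc ∑ k ∈ Finset.range K, ∑ t ∈ Finset.range N,
          qcssEntry p F α i (k + K * t) *
            (starRingEnd ℂ) (qcssEntry p F α j (k + K * ((t + τ) % N)))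
        = ∑ k ∈ Finset.range K, ∑ t ∈ Finset.range N, g (k + K * t) :=
          Finset.sum_congr rfl h1
      _ = ∑ m ∈ Finset.range (K * N), g m := sum_double g K N
      _ = ∑ m ∈ Finset.range (Fintype.card F - 1), g m := by rw [hKN]
      _ = ∑ m ∈ Finset.range (Fintype.card F - 1), w * (psiF p F (a * α ^ m) * z ^ m) :=
          Finset.sum_congr rfl fun m _ => hpoint m
      _ = w * ∑ m ∈ Finset.range (Fintype.card F - 1), psiF p F (a * α ^ m) * z ^ m := by
          rw [Finset.mul_sum]
      _ = w * ∑ m : Fin (Fintype.card F - 1), psiF p F (a * α ^ (m : ℕ)) * z ^ (m : ℕ) := by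
          rw [Finset.sum_range (fun m => psiF p F (a * α ^ m) * z ^ m)]
  rw [hsum]
  -- properties of z
  have hd0 : d ≠ 0 := by
    simp only [hd, sub_ne_zero]
    exact_mod_cast hij
  have hdlt : -((Fintype.card F - 1 : ℕ) : ℤ) < d ∧ d < ((Fintype.card F - 1 : ℕ) : ℤ) := by
    constructor <;> [skip; skip] <;> omega
  have hznd : ¬ ((Fintype.card F - 1 : ℕ) : ℤ) ∣ d := by
    rintro ⟨c, hc⟩
    rcases lt_trichotomy c 0 with hcneg | hc0 | hcpos
    · have h1 : c ≤ -1 := by omega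
      have h2 : d ≤ -((Fintype.card F - 1 : ℕ) : ℤ) := by
        rw [hc]
        nlinarith [hdlt.1, hdlt.2]
      omega
    · rw [hc0, mul_zero] at hc
      exact hd0 hc
    · have h1 : 1 ≤ c := by omega
      have h2 : ((Fintype.card F - 1 : ℕ) : ℤ) ≤ d := by
        rw [hc]
        nlinarith [hdlt.1, hdlt.2]
      omega
  have hz1 : z ≠ 1 := eN_ne_one _ hn0 d hznd
  have hzn : z ^ (Fintype.card F - 1) = 1 := eN_n_pow _ hn0 d
  have hzc : z * (starRingEnd ℂ) z = 1 := by
    rw [hz, conj_eN, ← eN_add, add_neg_cancel, eN_zero]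
  -- apply the Gauss sum computation
  have hTT := gauss_main p F α hα hq2 a ha z hz1 hzn hzc
  set T : ℂ := ∑ m : Fin (Fintype.card F - 1), psiF p F (a * α ^ (m : ℕ)) * z ^ (m : ℕ) with hT
  have hnormSq : Complex.normSq T = (Fintype.card F : ℝ) := by
    have h2 := Complex.mul_conj T
    rw [hTT] at h2
    exact_mod_cast h2.symm
  have habsT : ‖T‖ = Real.sqrt (Fintype.card F) := by
    rw [Complex.norm_def, hnormSq]
  rw [norm_mul, habsT, abs_eN, one_mul]
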